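/- arXiv:1411.0306 — 5 statements merged into one kernel-verified Lean document; each statement's English description precedes it below -/
import Mathlib

section
/- Let K be an n×n positive semidefinite matrix, S ∈ ℝ^{n×p} an arbitrary matrix, and γ > 0. Then the regularized Nyström approximation L_γ = KS(SᵀKS + nγI)⁻¹SᵀK satisfies L_γ ⪯ K in the Loewner order. -/
open Matrix

lemma aux_posDef_smul_one {m : Type*} [Fintype m] [DecidableEq m] [Nonempty m]
    {c : ℝ} (hc : 0 < c) : (c • (1 : Matrix m m ℝ)).PosDef := by
  rw [Matrix.smul_one_eq_diagonal]
  exact Matrix.posDef_diagonal_iff.mpr fun _ => hc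

lemma aux_posSemidef_smul {m : Type*} [Fintype m] {A : Matrix m m ℝ}
    (hA : A.PosSemidef) {c : ℝ} (hc : 0 ≤ c) : (c • A).PosSemidef := by
  constructor
  · ext i j
    have h := congrFun (congrFun hA.1 i) j
    simp only [Matrix.conjTranspose_apply, star_trivial] at h
    simp [Matrix.conjTranspose_apply, h]
  · intro x
    have := (hA.smul hc).2 x
    simpa using this

/-- The regularized Nyström approximation `L_γ = K S (SᵀKS + nγI)⁻¹ Sᵀ K`
    satisfies `L_γ ⪯ K` in the Loewner order. -/
theorem nystrom_le_K
    (n p : ℕ) (K : Matrix (Fin n) (Fin n) ℝ) (S : Matrix (Fin n) (Fin p) ℝ) (γ : ℝ)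
    (hK : K.PosSemidef) (hγ : 0 < γ) :
    (K - K * S * (Sᵀ * K * S + ((n : ℝ) * γ) • (1 : Matrix (Fin p) (Fin p) ℝ))⁻¹ * Sᵀ * K).PosSemidef := by
  rcases Nat.eq_zero_or_pos n with hn | hn
  · subst hn
    exact ⟨by ext i j; exact i.elim0, fun x => by simp [dotProduct, Subsingleton.elim x 0]⟩
  set c : ℝ := (n : ℝ) * γ with hc
  have hcpos : 0 < c := mul_pos (by exact_mod_cast hn) hγ
  have hnpos : Nonempty (Fin n) := ⟨⟨0, hn⟩⟩
  set R : Matrix (Fin n) (Fin n) ℝ := (open scoped MatrixOrder in CFC.sqrt K) with hR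
  have hRps : R.PosSemidef := (open scoped MatrixOrder in (CFC.sqrt_nonneg K).posSemidef)
  have hRR : R * R = K := open scoped MatrixOrder in CFC.sqrt_mul_sqrt_self K hK.nonneg
  have hRt : Rᵀ = R := by
    have := hRps.1
    rwa [Matrix.IsHermitian, Matrix.conjTranspose_eq_transpose_of_trivial] at this
  set M : Matrix (Fin n) (Fin p) ℝ := R * S with hM
  -- rewrite the p×p block
  have hB : Sᵀ * K * S + c • (1 : Matrix (Fin p) (Fin p) ℝ)
      = Mᵀ * M + c • 1 := by
    rw [hM, Matrix.transpose_mul, hRt, ← hRR]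
    simp [Matrix.mul_assoc]
  set B : Matrix (Fin p) (Fin p) ℝ := Mᵀ * M + c • 1 with hBdef
  set A : Matrix (Fin n) (Fin n) ℝ := M * Mᵀ + c • 1 with hAdef
  have hMtM : (Mᵀ * M).PosSemidef := by
    have := Matrix.posSemidef_conjTranspose_mul_self M
    rwa [Matrix.conjTranspose_eq_transpose_of_trivial] at this
  have hMMt : (M * Mᵀ).PosSemidef := by
    have := Matrix.posSemidef_self_mul_conjTranspose M
    rwa [Matrix.conjTranspose_eq_transpose_of_trivial] at this
  by_cases hp : Nonempty (Fin p)
  case neg =>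
    -- p = 0 : the correction term vanishes
    have hS0 : S = 0 := by ext i j; exact absurd ⟨j⟩ hp
    simpa [hS0] using hK
  have hBpd : B.PosDef := Matrix.PosDef.posSemidef_add hMtM (aux_posDef_smul_one hcpos)
  have hApd : A.PosDef := Matrix.PosDef.posSemidef_add hMMt (aux_posDef_smul_one hcpos)
  have hBu : IsUnit B.det := hBpd.det_pos.ne'.isUnit
  have hAu : IsUnit A.det := hApd.det_pos.ne'.isUnit
  -- push-through identity
  have hpush : M * B⁻¹ = A⁻¹ * M := by
    have h1 : A * M = M * B := by
      rw [hAdef, hBdef]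
      simp [Matrix.add_mul, Matrix.mul_add, Matrix.mul_assoc, Matrix.mul_smul,
        Matrix.smul_mul]
    calc M * B⁻¹ = A⁻¹ * (A * M) * B⁻¹ := by
          rw [← Matrix.mul_assoc, Matrix.nonsing_inv_mul _ hAu, Matrix.one_mul]
      _ = A⁻¹ * (M * B * B⁻¹) := by rw [h1, Matrix.mul_assoc]
      _ = A⁻¹ * M := by rw [Matrix.mul_assoc, Matrix.mul_nonsing_inv _ hBu, Matrix.mul_one]
  -- main algebraic identity
  have key : K - K * S * (Sᵀ * K * S + c • (1 : Matrix (Fin p) (Fin p) ℝ))⁻¹ * Sᵀ * K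
      = R * (c • A⁻¹) * R := by
    rw [hB]
    have h2 : K * S * B⁻¹ * Sᵀ * K = R * (A⁻¹ * (M * Mᵀ)) * R := by
      have h2a : K * S * B⁻¹ * Sᵀ * K = R * (M * B⁻¹ * Mᵀ) * R := by
        rw [← hRR, hM, Matrix.transpose_mul, hRt]
        simp [Matrix.mul_assoc]
      rw [h2a, hpush]
      simp [Matrix.mul_assoc]
    have h3 : K = R * (A⁻¹ * A) * R := by
      rw [Matrix.nonsing_inv_mul _ hAu, Matrix.mul_one, hRR]
    rw [h2]
    nth_rewrite 1 [h3]
    rw [← Matrix.sub_mul, ← Matrix.mul_sub, ← Matrix.mul_sub]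
    congr 1
    congr 1
    rw [hAdef, add_sub_cancel_left, Matrix.mul_smul, Matrix.mul_one]
  rw [key]
  have hfin : (R * (c • A⁻¹) * R).PosSemidef := by
    have hinv : (c • A⁻¹).PosSemidef := aux_posSemidef_smul hApd.inv.posSemidef hcpos.le
    have := hinv.mul_mul_conjTranspose_same R
    rwa [Matrix.conjTranspose_eq_transpose_of_trivial, hRt] at this
  exact hfin
end

section
/- Let K be an n×n positive semidefinite matrix and S ∈ ℝ^{n×p}. For 0 < γ ≤ γ', the regularized Nyström approximations satisfy L_{γ'} ⪯ L_γ, where L_γ = KS(SᵀKS + nγI)⁻¹SᵀK. In particular L_γ ⪯ KS(SᵀKS)†SᵀK for all γ > 0. -/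
open Matrix

section Aux

variable {q : ℕ}

private lemma real_transpose_eq {A : Matrix (Fin q) (Fin q) ℝ} (h : A.IsHermitian) : Aᵀ = A := by
  rw [← conjTranspose_eq_transpose_of_trivial]; exact h.eq

private lemma psd_smul {A : Matrix (Fin q) (Fin q) ℝ} (hA : A.PosSemidef) {c : ℝ} (hc : 0 ≤ c) :
    (c • A).PosSemidef := by
  refine posSemidef_iff_dotProduct_mulVec.mpr ⟨?_, fun x => ?_⟩
  · have := hA.1
    unfold Matrix.IsHermitian at *
    rw [conjTranspose_smul, this]
    simp
  · rw [smul_mulVec, dotProduct_smul]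
    exact mul_nonneg hc (hA.dotProduct_mulVec_nonneg x)

private lemma posdef_smul_one {c : ℝ} (hc : 0 < c) :
    (c • (1 : Matrix (Fin q) (Fin q) ℝ)).PosDef := by
  refine posDef_iff_dotProduct_mulVec.mpr ⟨?_, fun x hx => ?_⟩
  · unfold Matrix.IsHermitian
    rw [conjTranspose_smul, conjTranspose_one]
    simp
  · rw [smul_mulVec, dotProduct_smul, one_mulVec]
    exact mul_pos hc (by simpa using dotProduct_star_self_pos_iff.mpr hx)

private lemma psd_conj {k : ℕ} {C : Matrix (Fin q) (Fin q) ℝ} (hC : C.PosSemidef)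
    (B : Matrix (Fin k) (Fin q) ℝ) : (B * C * Bᵀ).PosSemidef := by
  simpa [conjTranspose_eq_transpose_of_trivial] using hC.mul_mul_conjTranspose_same B

private lemma psd_fin_zero {n : ℕ} (hn : n = 0) (A : Matrix (Fin n) (Fin n) ℝ) :
    A.PosSemidef := by
  subst hn
  refine posSemidef_iff_dotProduct_mulVec.mpr ⟨?_, fun x => ?_⟩
  · ext i j; exact i.elim0
  · simp [dotProduct]

end Aux

/-- `B` is the Moore–Penrose pseudoinverse of `A` (its four defining properties,
    which determine it uniquely). -/
def IsMoorePenrose {p : ℕ} (A B : Matrix (Fin p) (Fin p) ℝ) : Prop :=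
  A * B * A = A ∧ B * A * B = B ∧ (A * B)ᵀ = A * B ∧ (B * A)ᵀ = B * A

section MP

variable {q : ℕ}

private lemma mp_unique {M B C : Matrix (Fin q) (Fin q) ℝ}
    (hB : IsMoorePenrose M B) (hC : IsMoorePenrose M C) : B = C := by
  obtain ⟨b1, b2, b3, b4⟩ := hB
  obtain ⟨c1, c2, c3, c4⟩ := hC
  have hMt : Mᵀ = Mᵀ * (M * C) := by
    conv_lhs => rw [← c1]
    rw [transpose_mul, c3]
  have hB' : B = B * (M * C) := by
    calc B = B * M * B := b2.symm
    _ = B * (M * B) := by rw [Matrix.mul_assoc]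
    _ = B * (M * B)ᵀ := by rw [b3]
    _ = B * (Bᵀ * Mᵀ) := by rw [transpose_mul]
    _ = B * (Bᵀ * (Mᵀ * (M * C))) := by rw [← hMt]
    _ = B * (M * B)ᵀ * (M * C) := by
        rw [transpose_mul]; noncomm_ring
    _ = B * (M * B) * (M * C) := by rw [b3]
    _ = B * M * B * (M * C) := by rw [Matrix.mul_assoc B M B]
    _ = B * (M * C) := by rw [b2]
  have hMt2 : Mᵀ = (B * M) * Mᵀ := by
    conv_lhs => rw [← b1, Matrix.mul_assoc]
    rw [transpose_mul, b4]
  have hC' : C = (B * M) * C := by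
    calc C = C * M * C := c2.symm
    _ = (C * M)ᵀ * C := by rw [c4]
    _ = Mᵀ * Cᵀ * C := by rw [transpose_mul]
    _ = (B * M) * Mᵀ * Cᵀ * C := by rw [← hMt2]
    _ = (B * M) * ((C * M)ᵀ * C) := by rw [transpose_mul]; noncomm_ring
    _ = (B * M) * (C * M * C) := by rw [c4]
    _ = (B * M) * C := by rw [c2]
  rw [hB', ← Matrix.mul_assoc, ← hC']

private lemma mp_symm {M P : Matrix (Fin q) (Fin q) ℝ} (hM : Mᵀ = M)
    (h : IsMoorePenrose M P) : Pᵀ = P := by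
  obtain ⟨h1, h2, h3, h4⟩ := h
  refine mp_unique ⟨?_, ?_, ?_, ?_⟩ ⟨h1, h2, h3, h4⟩
  · calc M * Pᵀ * M = (Mᵀ * P * Mᵀ)ᵀ := by simp [transpose_mul, Matrix.mul_assoc]
    _ = M := by rw [hM, h1, hM]
  · calc Pᵀ * M * Pᵀ = (P * Mᵀ * P)ᵀ := by simp [transpose_mul, Matrix.mul_assoc]
    _ = Pᵀ := by rw [hM, h2]
  · have : M * Pᵀ = (P * Mᵀ)ᵀ := by simp [transpose_mul]
    rw [this, hM, h4, h4]
  · have : Pᵀ * M = (Mᵀ * P)ᵀ := by simp [transpose_mul]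
    rw [this, hM, h3, h3]

end MP

/-- Monotonicity of the regularized Nyström approximation in the regularization:
    for `0 < γ ≤ γ'`, `L_{γ'} ⪯ L_γ`, and `L_γ ⪯ K S (SᵀKS)† Sᵀ K`. -/
theorem nystrom_monotone_in_gamma
    (n p : ℕ) (K : Matrix (Fin n) (Fin n) ℝ) (S : Matrix (Fin n) (Fin p) ℝ) (γ γ' : ℝ)
    (hK : K.PosSemidef) (hγ : 0 < γ) (hγ' : γ ≤ γ') :
    (K * S * (Sᵀ * K * S + ((n : ℝ) * γ) • (1 : Matrix (Fin p) (Fin p) ℝ))⁻¹ * Sᵀ * K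
      - K * S * (Sᵀ * K * S + ((n : ℝ) * γ') • (1 : Matrix (Fin p) (Fin p) ℝ))⁻¹ * Sᵀ * K).PosSemidef
    ∧ ∀ P : Matrix (Fin p) (Fin p) ℝ, IsMoorePenrose (Sᵀ * K * S) P →
      (K * S * P * Sᵀ * K
        - K * S * (Sᵀ * K * S + ((n : ℝ) * γ) • (1 : Matrix (Fin p) (Fin p) ℝ))⁻¹ * Sᵀ * K).PosSemidef := by
  rcases Nat.eq_zero_or_pos n with hn | hn
  · exact ⟨psd_fin_zero hn _, fun P _ => psd_fin_zero hn _⟩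
  have hc : (0:ℝ) < (n : ℝ) * γ := mul_pos (by exact_mod_cast hn) hγ
  have hc' : (0:ℝ) < (n : ℝ) * γ' := mul_pos (by exact_mod_cast hn) (lt_of_lt_of_le hγ hγ')
  have hd : (0:ℝ) ≤ (n : ℝ) * γ' - (n : ℝ) * γ := by nlinarith
  set c : ℝ := (n : ℝ) * γ with hcdef
  set c' : ℝ := (n : ℝ) * γ' with hc'def
  set d : ℝ := c' - c with hddef
  set Mm : Matrix (Fin p) (Fin p) ℝ := Sᵀ * K * S with hMmdef
  have hMm : Mm.PosSemidef := by
    rw [hMmdef]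
    simpa [conjTranspose_eq_transpose_of_trivial, Matrix.mul_assoc] using
      hK.conjTranspose_mul_mul_same S
  set A : Matrix (Fin p) (Fin p) ℝ := Mm + c • 1 with hAdef
  set A' : Matrix (Fin p) (Fin p) ℝ := Mm + c' • 1 with hA'def
  have hA : A.PosDef := Matrix.PosDef.posSemidef_add hMm (posdef_smul_one hc)
  have hA' : A'.PosDef := Matrix.PosDef.posSemidef_add hMm (posdef_smul_one hc')
  have hAX : A * A⁻¹ = 1 := A.mul_nonsing_inv hA.det_pos.ne'.isUnit
  have hXA : A⁻¹ * A = 1 := A.nonsing_inv_mul hA.det_pos.ne'.isUnit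
  have hA'X : A' * A'⁻¹ = 1 := A'.mul_nonsing_inv hA'.det_pos.ne'.isUnit
  have hXA' : A'⁻¹ * A' = 1 := A'.nonsing_inv_mul hA'.det_pos.ne'.isUnit
  have hXpsd : A⁻¹.PosSemidef := hA.inv.posSemidef
  have hXsymm : A⁻¹ᵀ = A⁻¹ := real_transpose_eq hA.inv.1
  have hX'symm : A'⁻¹ᵀ = A'⁻¹ := real_transpose_eq hA'.inv.1
  have hKsymm : Kᵀ = K := real_transpose_eq hK.1
  have hMmsymm : Mmᵀ = Mm := real_transpose_eq hMm.1
  constructor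
  · -- Part 1
    have e0 : A' = A + d • 1 := by
      rw [hAdef, hA'def, hddef, sub_smul]
      abel
    have e1 : A⁻¹ - A'⁻¹ = d • (A'⁻¹ * A⁻¹) := by
      calc A⁻¹ - A'⁻¹ = A'⁻¹ * A' * A⁻¹ - A'⁻¹ * (A * A⁻¹) := by rw [hXA', hAX]; simp
      _ = A'⁻¹ * ((A' - A) * A⁻¹) := by noncomm_ring
      _ = d • (A'⁻¹ * A⁻¹) := by
          rw [e0]
          simp [Matrix.add_mul, Matrix.smul_mul, Matrix.mul_smul]
    have e2 : A⁻¹ * A' = 1 + d • A⁻¹ := by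
      rw [e0, Matrix.mul_add, hXA, Matrix.mul_smul, Matrix.mul_one]
    have e3 : A'⁻¹ * A⁻¹ = A'⁻¹ * (1 + d • A⁻¹) * A'⁻¹ := by
      calc A'⁻¹ * A⁻¹ = A'⁻¹ * A⁻¹ * (A' * A'⁻¹) := by rw [hA'X]; simp
      _ = A'⁻¹ * (A⁻¹ * A') * A'⁻¹ := by noncomm_ring
      _ = A'⁻¹ * (1 + d • A⁻¹) * A'⁻¹ := by rw [e2]
    have hdiff : A⁻¹ - A'⁻¹ = A'⁻¹ * (d • 1 + (d * d) • A⁻¹) * A'⁻¹ := by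
      rw [e1, e3]
      simp [Matrix.mul_add, Matrix.add_mul, Matrix.mul_smul, Matrix.smul_mul, smul_add,
        smul_smul, Matrix.mul_assoc]
    have ht : (K * S * A'⁻¹)ᵀ = A'⁻¹ * (Sᵀ * K) := by
      simp [transpose_mul, hX'symm, hKsymm, Matrix.mul_assoc]
    have expand : K * S * A⁻¹ * Sᵀ * K - K * S * A'⁻¹ * Sᵀ * K
        = (K * S * A'⁻¹) * (d • 1 + (d * d) • A⁻¹) * (K * S * A'⁻¹)ᵀ := by
      rw [ht]
      calc K * S * A⁻¹ * Sᵀ * K - K * S * A'⁻¹ * Sᵀ * K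
          = (K * S) * (A⁻¹ - A'⁻¹) * (Sᵀ * K) := by
            simp [Matrix.sub_mul, Matrix.mul_sub, Matrix.mul_assoc]
      _ = (K * S) * (A'⁻¹ * (d • 1 + (d * d) • A⁻¹) * A'⁻¹) * (Sᵀ * K) := by rw [hdiff]
      _ = (K * S * A'⁻¹) * (d • 1 + (d * d) • A⁻¹) * (A'⁻¹ * (Sᵀ * K)) := by
          simp [Matrix.mul_assoc]
    rw [expand]
    exact psd_conj ((psd_smul Matrix.PosSemidef.one hd).add
      (psd_smul hXpsd (mul_nonneg hd hd))) _
  · -- Part 2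
    intro P hP
    obtain ⟨h1, h2, h3, h4⟩ := hP
    have hPt : Pᵀ = P := mp_symm hMmsymm ⟨h1, h2, h3, h4⟩
    have hcomm : Mm * P = P * Mm := by
      have : (P * Mm)ᵀ = Mm * P := by rw [transpose_mul, hPt, hMmsymm]
      rw [← this, h4]
    -- kernel fact : K * S * (P * Mm) = K * S
    have hMN : Mm * (1 - P * Mm) = 0 := by
      rw [Matrix.mul_sub, Matrix.mul_one, ← Matrix.mul_assoc, h1, sub_self]
    obtain ⟨R, hR⟩ : ∃ R : Matrix (Fin n) (Fin n) ℝ, K = Rᴴ * R := by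
      open scoped MatrixOrder in
      exact CStarAlgebra.nonneg_iff_eq_star_mul_self.mp hK.nonneg
    have hzK : (S * (1 - P * Mm))ᵀ * K * (S * (1 - P * Mm)) = 0 := by
      have : (S * (1 - P * Mm))ᵀ * K * (S * (1 - P * Mm))
          = (1 - P * Mm)ᵀ * (Mm * (1 - P * Mm)) := by
        rw [hMmdef]
        simp [transpose_mul, Matrix.mul_assoc]
      rw [this, hMN, Matrix.mul_zero]
    have hz2 : R * (S * (1 - P * Mm)) = 0 := by
      apply conjTranspose_mul_self_eq_zero.mp
      calc (R * (S * (1 - P * Mm)))ᴴ * (R * (S * (1 - P * Mm)))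
          = (S * (1 - P * Mm))ᵀ * K * (S * (1 - P * Mm)) := by
            rw [hR]
            simp [conjTranspose_mul, conjTranspose_eq_transpose_of_trivial, Matrix.mul_assoc]
      _ = 0 := hzK
    have hKSN : K * (S * (1 - P * Mm)) = 0 := by
      rw [hR, Matrix.mul_assoc, hz2, Matrix.mul_zero]
    have hker : K * S * (P * Mm) = K * S := by
      have h' : K * S - K * S * (P * Mm) = 0 := by
        calc K * S - K * S * (P * Mm)
            = K * (S * (1 - P * Mm)) := by
              simp [Matrix.mul_sub, Matrix.mul_one, Matrix.mul_assoc]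
        _ = 0 := hKSN
      exact (sub_eq_zero.mp h').symm
    have hkerT : P * Mm * (Sᵀ * K) = Sᵀ * K := by
      have hh := congrArg Matrix.transpose hker
      rw [transpose_mul, h4, transpose_mul, hKsymm] at hh
      exact hh
    have hXMm : A⁻¹ * Mm = 1 - c • A⁻¹ := by
      have hMA : Mm = A - c • 1 := by rw [hAdef]; abel
      rw [hMA, Matrix.mul_sub, hXA, Matrix.mul_smul, Matrix.mul_one]
    have e1 : P - A⁻¹ * (P * Mm) = c • (A⁻¹ * P) := by
      calc P - A⁻¹ * (P * Mm) = P - A⁻¹ * (Mm * P) := by rw [hcomm]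
      _ = P - (A⁻¹ * Mm) * P := by rw [Matrix.mul_assoc A⁻¹ Mm P]
      _ = P - (1 - c • A⁻¹) * P := by rw [hXMm]
      _ = c • (A⁻¹ * P) := by
          rw [Matrix.sub_mul, Matrix.one_mul, Matrix.smul_mul]
          abel
    have hPA : P * A = Mm * P + c • P := by
      rw [hAdef, Matrix.mul_add, Matrix.mul_smul, Matrix.mul_one, ← hcomm]
    have e2 : A⁻¹ * P = A⁻¹ * (Mm * P + c • P) * A⁻¹ := by
      calc A⁻¹ * P = A⁻¹ * P * (A * A⁻¹) := by rw [hAX]; simp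
      _ = A⁻¹ * (P * A) * A⁻¹ := by noncomm_ring
      _ = A⁻¹ * (Mm * P + c • P) * A⁻¹ := by rw [hPA]
    have cXP : c • (A⁻¹ * P) = A⁻¹ * (c • (Mm * P) + (c * c) • P) * A⁻¹ := by
      rw [e2]
      simp [Matrix.mul_add, Matrix.add_mul, Matrix.mul_smul, Matrix.smul_mul, smul_add,
        smul_smul, Matrix.mul_assoc]
    have ht2 : (K * S * A⁻¹)ᵀ = A⁻¹ * (Sᵀ * K) := by
      simp [transpose_mul, hXsymm, hKsymm, Matrix.mul_assoc]
    have key : K * S * A⁻¹ * Sᵀ * K = (K * S) * (A⁻¹ * (P * Mm)) * (Sᵀ * K) := by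
      calc K * S * A⁻¹ * Sᵀ * K = (K * S) * A⁻¹ * (Sᵀ * K) := by
            simp [Matrix.mul_assoc]
      _ = (K * S) * (A⁻¹ * (P * Mm * (Sᵀ * K))) := by rw [hkerT]; simp [Matrix.mul_assoc]
      _ = (K * S) * (A⁻¹ * (P * Mm)) * (Sᵀ * K) := by simp [Matrix.mul_assoc]
    have expand2 : K * S * P * Sᵀ * K - K * S * A⁻¹ * Sᵀ * K
        = (K * S * A⁻¹) * (c • (Mm * P) + (c * c) • P) * (K * S * A⁻¹)ᵀ := by
      rw [ht2, key]
      calc K * S * P * Sᵀ * K - (K * S) * (A⁻¹ * (P * Mm)) * (Sᵀ * K)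
          = (K * S) * (P - A⁻¹ * (P * Mm)) * (Sᵀ * K) := by
            simp [Matrix.sub_mul, Matrix.mul_sub, Matrix.mul_assoc]
      _ = (K * S) * (c • (A⁻¹ * P)) * (Sᵀ * K) := by rw [e1]
      _ = (K * S) * (A⁻¹ * (c • (Mm * P) + (c * c) • P) * A⁻¹) * (Sᵀ * K) := by rw [cXP]
      _ = (K * S * A⁻¹) * (c • (Mm * P) + (c * c) • P) * (A⁻¹ * (Sᵀ * K)) := by
          simp [Matrix.mul_assoc]
    rw [expand2]
    have hQQ : Mm * P = (Mm * P) * (Mm * P)ᵀ := by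
      rw [h3]
      have hstep : (Mm * P) * (Mm * P) = Mm * (P * Mm * P) := by noncomm_ring
      rw [hstep, h2]
    have hQ : (Mm * P).PosSemidef := by
      have hcj := psd_conj Matrix.PosSemidef.one (Mm * P)
      rw [Matrix.mul_one] at hcj
      rwa [hQQ]
    have hPpsd : P.PosSemidef := by
      have hcj := hMm.conjTranspose_mul_mul_same P
      rw [conjTranspose_eq_transpose_of_trivial, hPt, h2] at hcj
      exact hcj
    exact psd_conj ((psd_smul hQ hc.le).add (psd_smul hPpsd (mul_nonneg hc.le hc.le))) _
end

section
/- Let Σ = diag(σ₁,…,σₙ) with σ_i ≥ 0, γ > 0, R ∈ ℝ^{n×p}, and set Φ = Σ(Σ + nγI)⁻¹ and D = (Σ + nγI)^{-1/2}(Σ − RRᵀ)(Σ + nγI)^{-1/2}. If λ_max(D) ≤ t for some t ∈ (0,1), then I − RRᵀ(RRᵀ + nγI)⁻¹ ⪯ (nγ/(1−t))(Σ + nγI)⁻¹. -/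
open Matrix

lemma smul_posSemidef {m : Type*} [Fintype m] {c : ℝ} (hc : 0 ≤ c)
    {M : Matrix m m ℝ} (hM : M.PosSemidef) : (c • M).PosSemidef := by
  refine ⟨?_, fun x => ?_⟩
  · show (c • M)ᴴ = c • M
    rw [conjTranspose_smul, hM.1.eq, star_trivial]
  · exact (hM.smul hc).2 x

set_option maxHeartbeats 1000000 in
open scoped MatrixOrder in
lemma key_inv_anti {m : Type*} [Fintype m] [DecidableEq m] (e : m → ℝ) (he : ∀ i, 0 < e i)
    (Y : Matrix m m ℝ) (hY : Y.PosDef) (h : (Y - Matrix.diagonal e).PosSemidef) :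
    ((Matrix.diagonal e)⁻¹ - Y⁻¹).PosSemidef := by
  set E : Matrix m m ℝ := Matrix.diagonal (fun i => (Real.sqrt (e i))⁻¹) with hEdef
  set F : Matrix m m ℝ := Matrix.diagonal (fun i => Real.sqrt (e i)) with hFdef
  have hsq : ∀ i, Real.sqrt (e i) ≠ 0 := fun i => (Real.sqrt_pos.mpr (he i)).ne'
  have hEF : E * F = 1 := by
    rw [hEdef, hFdef, diagonal_mul_diagonal,
      show (fun i => (Real.sqrt (e i))⁻¹ * Real.sqrt (e i)) = fun _ => (1:ℝ) from
        funext fun i => inv_mul_cancel₀ (hsq i), diagonal_one]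
  have hFE : F * E = 1 := by
    rw [hEdef, hFdef, diagonal_mul_diagonal,
      show (fun i => Real.sqrt (e i) * (Real.sqrt (e i))⁻¹) = fun _ => (1:ℝ) from
        funext fun i => mul_inv_cancel₀ (hsq i), diagonal_one]
  have hFF : F * F = Matrix.diagonal e := by
    rw [hFdef, diagonal_mul_diagonal,
      show (fun i => Real.sqrt (e i) * Real.sqrt (e i)) = e from
        funext fun i => Real.mul_self_sqrt (he i).le]
  have hEE : E * E = Matrix.diagonal (fun i => (e i)⁻¹) := by
    rw [hEdef, diagonal_mul_diagonal,
      show (fun i => (Real.sqrt (e i))⁻¹ * (Real.sqrt (e i))⁻¹) = (fun i => (e i)⁻¹) from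
        funext fun i => by rw [← mul_inv, Real.mul_self_sqrt (he i).le]]
  have hEh : Eᴴ = E := (isHermitian_diagonal _).eq
  have hFh : Fᴴ = F := (isHermitian_diagonal _).eq
  have hdetY : IsUnit Y.det := isUnit_iff_ne_zero.mpr hY.det_pos.ne'
  set Z : Matrix m m ℝ := E * Y * E with hZdef
  have hZinv : Z⁻¹ = F * Y⁻¹ * F := by
    apply Matrix.inv_eq_right_inv
    calc E * Y * E * (F * Y⁻¹ * F)
        = E * Y * (E * F) * Y⁻¹ * F := by noncomm_ring
      _ = E * (Y * Y⁻¹) * F := by rw [hEF]; noncomm_ring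
      _ = E * F := by rw [Matrix.mul_nonsing_inv Y hdetY]; noncomm_ring
      _ = 1 := hEF
  have hZright : Z * Z⁻¹ = 1 := by
    rw [hZinv]
    calc E * Y * E * (F * Y⁻¹ * F)
        = E * Y * (E * F) * Y⁻¹ * F := by noncomm_ring
      _ = E * (Y * Y⁻¹) * F := by rw [hEF]; noncomm_ring
      _ = E * F := by rw [Matrix.mul_nonsing_inv Y hdetY]; noncomm_ring
      _ = 1 := hEF
  have hZleft : Z⁻¹ * Z = 1 := by
    rw [hZinv]
    calc F * Y⁻¹ * F * (E * Y * E)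
        = F * Y⁻¹ * (F * E) * Y * E := by noncomm_ring
      _ = F * (Y⁻¹ * Y) * E := by rw [hFE]; noncomm_ring
      _ = F * E := by rw [Matrix.nonsing_inv_mul Y hdetY]; noncomm_ring
      _ = 1 := hFE
  have hZinvPSD : (Z⁻¹).PosSemidef := by
    have := hY.inv.posSemidef.mul_mul_conjTranspose_same F
    rw [hFh] at this
    rwa [hZinv]
  -- W = Z - 1 is PSD
  have hW : (Z - 1).PosSemidef := by
    have := h.mul_mul_conjTranspose_same E
    rw [hEh] at this
    have heq : E * (Y - Matrix.diagonal e) * E = Z - 1 := by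
      rw [hZdef, ← hFF]
      calc E * (Y - F * F) * E = E * Y * E - (E * F) * (F * E) := by noncomm_ring
        _ = E * Y * E - 1 := by rw [hEF, hFE, one_mul]
    rwa [heq] at this
  set S : Matrix m m ℝ := CFC.sqrt (Z - 1) with hSdef
  have hSS : S * S = Z - 1 := CFC.sqrt_mul_sqrt_self (Z - 1) hW.nonneg
  have hSh : Sᴴ = S := (CFC.sqrt_nonneg (Z - 1)).posSemidef.1.eq
  have hcommZ : S * Z = Z * S := by
    have hZ1 : Z = 1 + S * S := by rw [hSS]; abel
    rw [hZ1]; noncomm_ring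
  have hcomm : S * Z⁻¹ = Z⁻¹ * S := by
    calc S * Z⁻¹ = (Z⁻¹ * Z) * (S * Z⁻¹) := by rw [hZleft, one_mul]
      _ = Z⁻¹ * (Z * S) * Z⁻¹ := by simp only [Matrix.mul_assoc]
      _ = Z⁻¹ * (S * Z) * Z⁻¹ := by rw [hcommZ]
      _ = Z⁻¹ * S * (Z * Z⁻¹) := by simp only [Matrix.mul_assoc]
      _ = Z⁻¹ * S := by rw [hZright, mul_one]
  have hkey : 1 - Z⁻¹ = S * Z⁻¹ * S := by
    calc 1 - Z⁻¹ = Z * Z⁻¹ - 1 * Z⁻¹ := by rw [hZright, one_mul]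
      _ = (Z - 1) * Z⁻¹ := by noncomm_ring
      _ = S * (S * Z⁻¹) := by rw [← hSS]; noncomm_ring
      _ = S * (Z⁻¹ * S) := by rw [hcomm]
      _ = S * Z⁻¹ * S := by noncomm_ring
  have hpsd1 : (1 - Z⁻¹).PosSemidef := by
    have := hZinvPSD.mul_mul_conjTranspose_same S
    rw [hSh] at this
    rwa [← hkey] at this
  have hres := hpsd1.mul_mul_conjTranspose_same E
  rw [hEh] at hres
  have hdinv : (Matrix.diagonal e)⁻¹ = Matrix.diagonal (fun i => (e i)⁻¹) := by
    apply Matrix.inv_eq_right_inv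
    rw [diagonal_mul_diagonal,
      show (fun i => e i * (e i)⁻¹) = fun _ => (1:ℝ) from
        funext fun i => mul_inv_cancel₀ (he i).ne', diagonal_one]
  have hfinal : E * (1 - Z⁻¹) * E = (Matrix.diagonal e)⁻¹ - Y⁻¹ := by
    rw [hZinv, hdinv]
    have h1 : E * (1 - F * Y⁻¹ * F) * E = E * E - (E * F) * Y⁻¹ * (F * E) := by noncomm_ring
    rw [h1, hEF, hFE, hEE, one_mul, mul_one]
  rwa [hfinal] at hres

/-- If `D = (Σ + nγI)^{-1/2} (Σ − RRᵀ) (Σ + nγI)^{-1/2}` has largest eigenvalue at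
    most `t ∈ (0,1)` (expressed as `D ⪯ t I`), then
    `I − RRᵀ (RRᵀ + nγI)⁻¹ ⪯ (nγ/(1−t)) (Σ + nγI)⁻¹`. -/
theorem bias_key_psd_bound
    (n p : ℕ) (σ : Fin n → ℝ) (R : Matrix (Fin n) (Fin p) ℝ) (γ t : ℝ)
    (hσ : ∀ i, 0 ≤ σ i) (hγ : 0 < γ) (ht : t ∈ Set.Ioo (0 : ℝ) 1)
    (hD : (t • (1 : Matrix (Fin n) (Fin n) ℝ)
        - Matrix.diagonal (fun i => (Real.sqrt (σ i + n * γ))⁻¹)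
            * (Matrix.diagonal σ - R * Rᵀ)
            * Matrix.diagonal (fun i => (Real.sqrt (σ i + n * γ))⁻¹)).PosSemidef) :
    (((n : ℝ) * γ / (1 - t)) • (Matrix.diagonal σ + ((n : ℝ) * γ) • (1 : Matrix (Fin n) (Fin n) ℝ))⁻¹
      - (1 - R * Rᵀ * (R * Rᵀ + ((n : ℝ) * γ) • (1 : Matrix (Fin n) (Fin n) ℝ))⁻¹)).PosSemidef := by
  obtain ⟨ht0, ht1⟩ := ht
  have h1t : 0 < 1 - t := by linarith
  set c : ℝ := (n : ℝ) * γ with hcdef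
  have hcpos : ∀ _i : Fin n, 0 < c := fun i => mul_pos (by exact_mod_cast i.pos) hγ
  have hc0 : 0 ≤ c := mul_nonneg (Nat.cast_nonneg n) hγ.le
  have hd : ∀ i, 0 < σ i + c := fun i => add_pos_of_nonneg_of_pos (hσ i) (hcpos i)
  set M : Matrix (Fin n) (Fin n) ℝ := R * Rᵀ with hMdef
  have hMpsd : M.PosSemidef := by
    have := posSemidef_self_mul_conjTranspose R
    rwa [conjTranspose_eq_transpose_of_trivial] at this
  have hc1 : c • (1 : Matrix (Fin n) (Fin n) ℝ) = Matrix.diagonal (fun _ => c) := by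
    ext i j
    rcases eq_or_ne i j with h | h
    · subst h; simp
    · simp [Matrix.one_apply_ne h, Matrix.diagonal_apply_ne _ h]
  have hYpd : (M + c • (1 : Matrix (Fin n) (Fin n) ℝ)).PosDef := by
    refine Matrix.PosDef.posSemidef_add hMpsd ?_
    rw [hc1]
    exact Matrix.posDef_diagonal_iff.mpr hcpos
  -- Step 1: conjugate hD by F = diagonal sqrt
  set F : Matrix (Fin n) (Fin n) ℝ := Matrix.diagonal (fun i => Real.sqrt (σ i + c)) with hFdef
  set E0 : Matrix (Fin n) (Fin n) ℝ := Matrix.diagonal (fun i => (Real.sqrt (σ i + c))⁻¹) with hE0def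
  have hsq : ∀ i, Real.sqrt (σ i + c) ≠ 0 := fun i => (Real.sqrt_pos.mpr (hd i)).ne'
  have hFE0 : F * E0 = 1 := by
    rw [hFdef, hE0def, diagonal_mul_diagonal,
      show (fun i => Real.sqrt (σ i + c) * (Real.sqrt (σ i + c))⁻¹) = fun _ => (1:ℝ) from
        funext fun i => mul_inv_cancel₀ (hsq i), diagonal_one]
  have hE0F : E0 * F = 1 := by
    rw [hFdef, hE0def, diagonal_mul_diagonal,
      show (fun i => (Real.sqrt (σ i + c))⁻¹ * Real.sqrt (σ i + c)) = fun _ => (1:ℝ) from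
        funext fun i => inv_mul_cancel₀ (hsq i), diagonal_one]
  have hFF : F * F = Matrix.diagonal (fun i => σ i + c) := by
    rw [hFdef, diagonal_mul_diagonal,
      show (fun i => Real.sqrt (σ i + c) * Real.sqrt (σ i + c)) = (fun i => σ i + c) from
        funext fun i => Real.mul_self_sqrt (hd i).le]
  set X : Matrix (Fin n) (Fin n) ℝ := Matrix.diagonal σ - M with hXdef
  have hconj := hD.mul_mul_conjTranspose_same F
  rw [(isHermitian_diagonal _ : F.IsHermitian).eq] at hconj
  have e1 : F * (t • (1 : Matrix (Fin n) (Fin n) ℝ) - E0 * X * E0) * F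
      = t • (F * F) - (F * E0) * X * (E0 * F) := by
    rw [Matrix.mul_sub, Matrix.sub_mul]
    congr 1
    · rw [mul_smul_comm, mul_one, smul_mul_assoc]
    · simp only [Matrix.mul_assoc]
  rw [e1, hFF, hFE0, hE0F, one_mul, mul_one] at hconj
  -- hconj : (t • diagonal (σ+c) - X).PosSemidef
  have halg : t • Matrix.diagonal (fun i => σ i + c) - X
      = (M + c • (1 : Matrix (Fin n) (Fin n) ℝ))
        - Matrix.diagonal (fun i => (1 - t) * (σ i + c)) := by
    have h3 : Matrix.diagonal (fun i => (1 - t) * (σ i + c))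
        = Matrix.diagonal (fun i => σ i + c) - t • Matrix.diagonal (fun i => σ i + c) := by
      ext i j
      rcases eq_or_ne i j with h | h
      · subst h; simp; ring
      · simp [Matrix.diagonal_apply_ne _ h]
    have h4 : Matrix.diagonal σ = Matrix.diagonal (fun i => σ i + c)
        - c • (1 : Matrix (Fin n) (Fin n) ℝ) := by
      rw [hc1]
      ext i j
      rcases eq_or_ne i j with h | h
      · subst h; simp
      · simp [Matrix.diagonal_apply_ne _ h]
    rw [h3, hXdef, h4]
    abel
  rw [halg] at hconj
  have hmain := key_inv_anti (fun i => (1 - t) * (σ i + c))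
    (fun i => mul_pos h1t (hd i)) (M + c • 1) hYpd hconj
  -- now rewrite the goal
  have hA : Matrix.diagonal σ + c • (1 : Matrix (Fin n) (Fin n) ℝ)
      = Matrix.diagonal (fun i => σ i + c) := by
    rw [hc1, diagonal_add]
  have hdinv : (Matrix.diagonal (fun i => σ i + c))⁻¹
      = Matrix.diagonal (fun i => (σ i + c)⁻¹) := by
    apply Matrix.inv_eq_right_inv
    rw [diagonal_mul_diagonal,
      show (fun i => (σ i + c) * (σ i + c)⁻¹) = fun _ => (1:ℝ) from
        funext fun i => mul_inv_cancel₀ (hd i).ne', diagonal_one]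
  have heinv : (Matrix.diagonal (fun i => (1 - t) * (σ i + c)))⁻¹
      = Matrix.diagonal (fun i => ((1 - t) * (σ i + c))⁻¹) := by
    apply Matrix.inv_eq_right_inv
    rw [diagonal_mul_diagonal,
      show (fun i => ((1 - t) * (σ i + c)) * ((1 - t) * (σ i + c))⁻¹) = fun _ => (1:ℝ) from
        funext fun i => mul_inv_cancel₀ (mul_pos h1t (hd i)).ne', diagonal_one]
  have hu : IsUnit (M + c • (1 : Matrix (Fin n) (Fin n) ℝ)).det :=
    isUnit_iff_ne_zero.mpr hYpd.det_pos.ne'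
  have hpush : (1 : Matrix (Fin n) (Fin n) ℝ) - M * (M + c • 1)⁻¹ = c • (M + c • 1)⁻¹ := by
    have h5 : (M + c • (1 : Matrix (Fin n) (Fin n) ℝ)) * (M + c • 1)⁻¹ = 1 :=
      Matrix.mul_nonsing_inv _ hu
    calc (1 : Matrix (Fin n) (Fin n) ℝ) - M * (M + c • 1)⁻¹
        = (M + c • 1) * (M + c • 1)⁻¹ - M * (M + c • 1)⁻¹ := by rw [h5]
      _ = ((M + c • 1) - M) * (M + c • 1)⁻¹ := by rw [Matrix.sub_mul]
      _ = (c • (1 : Matrix (Fin n) (Fin n) ℝ)) * (M + c • 1)⁻¹ := by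
          congr 1
          abel
      _ = c • (M + c • 1)⁻¹ := by rw [smul_mul_assoc, one_mul]
  have hgoal : (c / (1 - t)) • (Matrix.diagonal σ + c • (1 : Matrix (Fin n) (Fin n) ℝ))⁻¹
      - (1 - M * (M + c • 1)⁻¹)
      = c • ((Matrix.diagonal (fun i => (1 - t) * (σ i + c)))⁻¹ - (M + c • 1)⁻¹) := by
    rw [hA, hdinv, heinv, hpush, smul_sub]
    congr 1
    ext i j
    rcases eq_or_ne i j with h | h
    · subst h
      simp only [Matrix.smul_apply, Matrix.diagonal_apply_eq, smul_eq_mul]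
      rw [mul_inv, div_eq_mul_inv]
      ring
    · simp [Matrix.diagonal_apply_ne _ h]
  rw [hgoal]
  exact smul_posSemidef hc0 hmain
end

section
/- Let K be an n×n positive semidefinite matrix, S ∈ ℝ^{n×p}, γ, λ > 0 and t ∈ (0,1) with γ ≤ (1−t)λ. Write K = UΣUᵀ, Φ = Σ(Σ+nγI)⁻¹, and L_γ = KS(SᵀKS+nγI)⁻¹SᵀK. If λ_max(Φ − Φ^{1/2}UᵀSSᵀUΦ^{1/2}) ≤ t, then K − L_γ ⪯ (nγ/(1−t)) K(K + nγI)⁻¹ ⪯ (nγ/(1−t)) I. -/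
open Matrix

lemma aux_psd_conj {m k : ℕ} {X : Matrix (Fin m) (Fin m) ℝ} (hX : X.PosSemidef)
    (A : Matrix (Fin k) (Fin m) ℝ) : (A * X * Aᵀ).PosSemidef := by
  have h := hX.mul_mul_conjTranspose_same A
  have : Aᴴ = Aᵀ := by ext i j; simp [conjTranspose_apply]
  rwa [this] at h

lemma aux_psd_smul {m : ℕ} {X : Matrix (Fin m) (Fin m) ℝ} (hX : X.PosSemidef) {c : ℝ}
    (hc : 0 ≤ c) : (c • X).PosSemidef := by
  refine ⟨?_, fun x => ?_⟩
  · unfold Matrix.IsHermitian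
    rw [conjTranspose_smul, hX.1.eq]
    simp
  · exact (hX.smul hc).2 x

lemma aux_psd_AAT {m k : ℕ} (A : Matrix (Fin m) (Fin k) ℝ) : (A * Aᵀ).PosSemidef := by
  have h := posSemidef_self_mul_conjTranspose A
  have : Aᴴ = Aᵀ := by ext i j; simp [conjTranspose_apply]
  rwa [this] at h

open scoped MatrixOrder in
lemma aux_one_sub_inv {m : ℕ} {N : Matrix (Fin m) (Fin m) ℝ} (hN : N.PosDef)
    (h : (N - 1).PosSemidef) : ((1 : Matrix (Fin m) (Fin m) ℝ) - N⁻¹).PosSemidef := by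
  have hNdet : IsUnit N.det := isUnit_iff_ne_zero.mpr hN.det_pos.ne'
  have hNinv : (N⁻¹).PosDef := hN.inv
  obtain ⟨s, hsymm, hss⟩ : ∃ s : Matrix (Fin m) (Fin m) ℝ, sᵀ = s ∧ s * s = N⁻¹ := by
    refine ⟨CFC.sqrt N⁻¹, ?_, CFC.sqrt_mul_sqrt_self N⁻¹ hNinv.posSemidef.nonneg⟩
    have h1 : (CFC.sqrt N⁻¹)ᴴ = CFC.sqrt N⁻¹ :=
      (CFC.sqrt_nonneg N⁻¹).posSemidef.1
    have h2 : (CFC.sqrt N⁻¹)ᴴ = (CFC.sqrt N⁻¹)ᵀ := by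
      ext i j; simp [conjTranspose_apply]
    rw [← h2, h1]
  have hsdetsq : s.det * s.det = N⁻¹.det := by rw [← det_mul, hss]
  have hsdet : IsUnit s.det := by
    refine isUnit_iff_ne_zero.mpr fun h0 => ?_
    rw [h0, mul_zero] at hsdetsq
    exact hNinv.det_pos.ne' hsdetsq.symm
  have hNs : N = s⁻¹ * s⁻¹ := by
    have h1 : (s * s)⁻¹ = N := by rw [hss, Matrix.nonsing_inv_nonsing_inv N hNdet]
    rw [Matrix.mul_inv_rev] at h1
    exact h1.symm
  have hkey := aux_psd_conj h s
  have heq : s * (N - 1) * sᵀ = 1 - N⁻¹ := by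
    rw [hsymm, Matrix.mul_sub, Matrix.sub_mul, Matrix.mul_one, hss]
    congr 1
    rw [hNs]
    rw [show s * (s⁻¹ * s⁻¹) * s = (s * s⁻¹) * (s⁻¹ * s) by simp [Matrix.mul_assoc],
      Matrix.mul_nonsing_inv s hsdet, Matrix.nonsing_inv_mul s hsdet, one_mul]
  rwa [heq] at hkey


/-- Structural bound: if `λ_max(Φ − Φ^{1/2} Uᵀ S Sᵀ U Φ^{1/2}) ≤ t` (expressed as a
    Loewner inequality against `t • I`), with `Φ = Σ(Σ + nγI)⁻¹`, then
    `K − L_γ ⪯ (nγ/(1−t)) K (K + nγI)⁻¹ ⪯ (nγ/(1−t)) I`. -/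
theorem structural_bias_bound
    (n p : ℕ) (K U : Matrix (Fin n) (Fin n) ℝ) (σ : Fin n → ℝ)
    (S : Matrix (Fin n) (Fin p) ℝ) (γ lam t : ℝ)
    (hK : K.PosSemidef) (hσ : ∀ i, 0 ≤ σ i)
    (hU₁ : U * Uᵀ = 1) (hU₂ : Uᵀ * U = 1)
    (hKdec : K = U * Matrix.diagonal σ * Uᵀ)
    (hγ : 0 < γ) (hlam : 0 < lam) (ht : t ∈ Set.Ioo (0 : ℝ) 1) (hγlam : γ ≤ (1 - t) * lam)
    (hdev : (t • (1 : Matrix (Fin n) (Fin n) ℝ)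
        - (Matrix.diagonal (fun i => σ i / (σ i + n * γ))
            - Matrix.diagonal (fun i => Real.sqrt (σ i / (σ i + n * γ)))
                * Uᵀ * S * Sᵀ * U
                * Matrix.diagonal (fun i => Real.sqrt (σ i / (σ i + n * γ))))).PosSemidef) :
    (((n : ℝ) * γ / (1 - t)) • (K * (K + ((n : ℝ) * γ) • (1 : Matrix (Fin n) (Fin n) ℝ))⁻¹)
      - (K - K * S * (Sᵀ * K * S + ((n : ℝ) * γ) • (1 : Matrix (Fin p) (Fin p) ℝ))⁻¹ * Sᵀ * K)).PosSemidef
    ∧ (((n : ℝ) * γ / (1 - t)) • (1 : Matrix (Fin n) (Fin n) ℝ)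
      - ((n : ℝ) * γ / (1 - t)) • (K * (K + ((n : ℝ) * γ) • (1 : Matrix (Fin n) (Fin n) ℝ))⁻¹)).PosSemidef := by
  obtain ⟨ht0, ht1⟩ := ht
  have h1t : 0 < 1 - t := by linarith
  rcases Nat.eq_zero_or_pos n with hn | hn
  · subst hn
    have h0 : ∀ M : Matrix (Fin 0) (Fin 0) ℝ, M.PosSemidef := fun M => by
      rw [Subsingleton.elim M 0]; exact .zero
    exact ⟨h0 _, h0 _⟩
  set μ : ℝ := (n : ℝ) * γ with hμdef
  have hμ : 0 < μ := mul_pos (by exact_mod_cast hn) hγ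
  have hσμ : ∀ i, 0 < σ i + μ := fun i => by have := hσ i; linarith
  set D : Matrix (Fin n) (Fin n) ℝ := Matrix.diagonal σ with hD
  set R : Matrix (Fin n) (Fin n) ℝ := Matrix.diagonal (fun i => Real.sqrt (σ i)) with hR
  set E : Matrix (Fin n) (Fin n) ℝ := Matrix.diagonal (fun i => Real.sqrt (σ i + μ)) with hE
  set B : Matrix (Fin n) (Fin p) ℝ := Uᵀ * S with hB
  set Φ : Matrix (Fin n) (Fin n) ℝ := Matrix.diagonal (fun i => σ i / (σ i + μ)) with hΦ
  set Φh : Matrix (Fin n) (Fin n) ℝ :=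
    Matrix.diagonal (fun i => Real.sqrt (σ i / (σ i + μ))) with hΦh
  clear_value μ D R E B Φ Φh
  have hRsymm : Rᵀ = R := by rw [hR, Matrix.diagonal_transpose]
  have hEsymm : Eᵀ = E := by rw [hE, Matrix.diagonal_transpose]
  have hRR : R * R = D := by
    rw [hR, hD, Matrix.diagonal_mul_diagonal]
    exact congrArg Matrix.diagonal (funext fun i => Real.mul_self_sqrt (hσ i))
  have hDμ : D + μ • (1 : Matrix (Fin n) (Fin n) ℝ) = Matrix.diagonal (fun i => σ i + μ) := by
    rw [hD, Matrix.smul_one_eq_diagonal, Matrix.diagonal_add]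
  have hEE : E * E = D + μ • (1 : Matrix (Fin n) (Fin n) ℝ) := by
    rw [hE, hDμ, Matrix.diagonal_mul_diagonal]
    exact congrArg Matrix.diagonal (funext fun i => Real.mul_self_sqrt (hσμ i).le)
  have hEΦh : E * Φh = R := by
    rw [hE, hΦh, hR, Matrix.diagonal_mul_diagonal]
    refine congrArg Matrix.diagonal (funext fun i => ?_)
    rw [← Real.sqrt_mul (hσμ i).le]
    congr 1
    rw [mul_comm, div_mul_cancel₀ _ (hσμ i).ne']
  have hΦhE : Φh * E = R := by
    rw [hE, hΦh, hR, Matrix.diagonal_mul_diagonal]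
    refine congrArg Matrix.diagonal (funext fun i => ?_)
    rw [mul_comm, ← Real.sqrt_mul (hσμ i).le]
    congr 1
    rw [mul_comm, div_mul_cancel₀ _ (hσμ i).ne']
  have hEΦE : E * Φ * E = D := by
    rw [hE, hΦ, hD, Matrix.diagonal_mul_diagonal, Matrix.diagonal_mul_diagonal]
    refine congrArg Matrix.diagonal (funext fun i => ?_)
    rw [mul_comm (Real.sqrt (σ i + μ)) _, mul_assoc, Real.mul_self_sqrt (hσμ i).le]
    exact div_mul_cancel₀ _ (hσμ i).ne'
  -- rewrite the deviation hypothesis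
  have hBt : Bᵀ = Sᵀ * U := by rw [hB, Matrix.transpose_mul, Matrix.transpose_transpose]
  have hdev2 : (t • (1 : Matrix (Fin n) (Fin n) ℝ) - (Φ - Φh * B * Bᵀ * Φh)).PosSemidef := by
    have h : Φh * B * Bᵀ * Φh = Φh * Uᵀ * S * Sᵀ * U * Φh := by
      rw [hBt, hB]; simp only [Matrix.mul_assoc]
    rw [h]
    exact hdev
  set M : Matrix (Fin n) (Fin n) ℝ := R * B * Bᵀ * R + μ • 1 with hM
  set G : Matrix (Fin n) (Fin n) ℝ := Matrix.diagonal (fun i => (1 - t) * (σ i + μ)) with hG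
  clear_value M G
  have hGeq : G = (1 - t) • (D + μ • (1 : Matrix (Fin n) (Fin n) ℝ)) := by
    rw [hG, hDμ, ← Matrix.diagonal_smul]
    refine congrArg Matrix.diagonal (funext fun i => ?_)
    simp [smul_eq_mul]
  have hexp : E * (t • (1 : Matrix (Fin n) (Fin n) ℝ) - (Φ - Φh * B * Bᵀ * Φh)) * E
      = M - G := by
    have e1 : E * (t • (1 : Matrix (Fin n) (Fin n) ℝ)) * E = t • (E * E) := by
      rw [Matrix.mul_smul, Matrix.mul_one, Matrix.smul_mul]
    have e2 : E * (Φh * B * Bᵀ * Φh) * E = R * B * Bᵀ * R := by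
      rw [show E * (Φh * B * Bᵀ * Φh) * E = (E * Φh) * B * Bᵀ * (Φh * E) from by
        simp only [Matrix.mul_assoc], hEΦh, hΦhE]
    calc E * (t • (1 : Matrix (Fin n) (Fin n) ℝ) - (Φ - Φh * B * Bᵀ * Φh)) * E
        = E * (t • (1 : Matrix (Fin n) (Fin n) ℝ)) * E
            - (E * Φ * E - E * (Φh * B * Bᵀ * Φh) * E) := by
          simp only [Matrix.mul_sub, Matrix.sub_mul]
      _ = t • (E * E) - (D - R * B * Bᵀ * R) := by rw [e1, e2, hEΦE]
      _ = M - G := by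
          rw [hEE, hM, hGeq]
          module
  have hMG : (M - G).PosSemidef := by
    have h := aux_psd_conj hdev2 E
    rwa [hEsymm, hexp] at h
  have hMpd : M.PosDef := by
    rw [hM]
    refine Matrix.PosDef.posSemidef_add ?_ ?_
    · have h : R * B * (R * B)ᵀ = R * B * Bᵀ * R := by
        rw [Matrix.transpose_mul, hRsymm, ← Matrix.mul_assoc]
      rw [← h]
      exact aux_psd_AAT (R * B)
    · rw [Matrix.smul_one_eq_diagonal]
      exact Matrix.posDef_diagonal_iff.mpr fun _ => hμ
  have hMdet : IsUnit M.det := isUnit_iff_ne_zero.mpr hMpd.det_pos.ne'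
  -- square root of G⁻¹
  set g : Matrix (Fin n) (Fin n) ℝ :=
    Matrix.diagonal (fun i => (Real.sqrt ((1 - t) * (σ i + μ)))⁻¹) with hg
  clear_value g
  have hy : ∀ i, 0 < (1 - t) * (σ i + μ) := fun i => mul_pos h1t (hσμ i)
  have hsy : ∀ i, Real.sqrt ((1 - t) * (σ i + μ)) ≠ 0 :=
    fun i => (Real.sqrt_pos.mpr (hy i)).ne'
  have hgpd : g.PosDef := by
    rw [hg]
    exact Matrix.posDef_diagonal_iff.mpr fun i => inv_pos.mpr (Real.sqrt_pos.mpr (hy i))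
  have hgdet : IsUnit g.det := isUnit_iff_ne_zero.mpr hgpd.det_pos.ne'
  have hgsymm : gᵀ = g := by rw [hg, Matrix.diagonal_transpose]
  have hgGg : g * G * g = 1 := by
    rw [hg, hG, Matrix.diagonal_mul_diagonal, Matrix.diagonal_mul_diagonal,
      ← Matrix.diagonal_one]
    refine congrArg Matrix.diagonal (funext fun i => ?_)
    have h2 : Real.sqrt ((1 - t) * (σ i + μ)) * Real.sqrt ((1 - t) * (σ i + μ))
        = (1 - t) * (σ i + μ) := Real.mul_self_sqrt (hy i).le
    rw [show (Real.sqrt ((1 - t) * (σ i + μ)))⁻¹ * ((1 - t) * (σ i + μ))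
        * (Real.sqrt ((1 - t) * (σ i + μ)))⁻¹
        = ((1 - t) * (σ i + μ))
          * (Real.sqrt ((1 - t) * (σ i + μ)) * Real.sqrt ((1 - t) * (σ i + μ)))⁻¹ from by
      rw [mul_inv]; ring, h2]
    exact mul_inv_cancel₀ (hy i).ne'
  set N : Matrix (Fin n) (Fin n) ℝ := g * M * g with hN
  clear_value N
  have hN1 : (N - 1).PosSemidef := by
    have h := aux_psd_conj hMG g
    have heq : g * (M - G) * gᵀ = N - 1 := by
      rw [hgsymm, Matrix.mul_sub, Matrix.sub_mul, hgGg, hN]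
    rwa [heq] at h
  have hNpd : N.PosDef := by
    have h := Matrix.PosDef.posSemidef_add hN1 Matrix.PosDef.one
    rwa [sub_add_cancel] at h
  have honeN : ((1 : Matrix (Fin n) (Fin n) ℝ) - N⁻¹).PosSemidef := aux_one_sub_inv hNpd hN1
  -- M⁻¹ = g * N⁻¹ * g
  have hMinv : M⁻¹ = g * N⁻¹ * g := by
    have h1 : g⁻¹ * N * g⁻¹ = M := by
      rw [hN]
      rw [show g⁻¹ * (g * M * g) * g⁻¹ = (g⁻¹ * g) * M * (g * g⁻¹) from by
        simp only [Matrix.mul_assoc], Matrix.nonsing_inv_mul g hgdet,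
        Matrix.mul_nonsing_inv g hgdet, Matrix.one_mul, Matrix.mul_one]
    rw [← h1, Matrix.mul_inv_rev, Matrix.mul_inv_rev, Matrix.nonsing_inv_nonsing_inv g hgdet,
      Matrix.mul_assoc]
  -- the p × p matrix
  set P : Matrix (Fin p) (Fin p) ℝ := Bᵀ * D * B + μ • 1 with hP
  clear_value P
  have hPA : P = (R * B)ᵀ * (R * B) + μ • 1 := by
    rw [hP, Matrix.transpose_mul, hRsymm,
      show Bᵀ * R * (R * B) = Bᵀ * (R * R) * B from by simp only [Matrix.mul_assoc], hRR]
  have hPpd : P.PosDef := by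
    rw [hPA]
    refine Matrix.PosDef.posSemidef_add ?_ ?_
    · have h := aux_psd_AAT (R * B)ᵀ
      rwa [Matrix.transpose_transpose] at h
    · rw [Matrix.smul_one_eq_diagonal]
      exact Matrix.posDef_diagonal_iff.mpr fun _ => hμ
  have hPdet : IsUnit P.det := isUnit_iff_ne_zero.mpr hPpd.det_pos.ne'
  have hMA : M = (R * B) * (R * B)ᵀ + μ • 1 := by
    rw [hM, Matrix.transpose_mul, hRsymm]
    simp only [Matrix.mul_assoc]
  -- push-through identity
  have hcomm : M * (R * B) = (R * B) * P := by
    rw [hMA, hPA, Matrix.add_mul, Matrix.mul_add, Matrix.smul_mul, Matrix.mul_smul,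
      Matrix.one_mul, Matrix.mul_one, Matrix.mul_assoc]
  have hpt : (R * B) * P⁻¹ = M⁻¹ * (R * B) := by
    have h2 : M * ((R * B) * P⁻¹) = R * B := by
      rw [← Matrix.mul_assoc, hcomm, Matrix.mul_assoc, Matrix.mul_nonsing_inv P hPdet,
        Matrix.mul_one]
    calc (R * B) * P⁻¹ = (M⁻¹ * M) * ((R * B) * P⁻¹) := by
          rw [Matrix.nonsing_inv_mul M hMdet, Matrix.one_mul]
      _ = M⁻¹ * (M * ((R * B) * P⁻¹)) := by rw [Matrix.mul_assoc]
      _ = M⁻¹ * (R * B) := by rw [h2]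
  -- the key identity
  have hMAA : M⁻¹ * ((R * B) * (R * B)ᵀ) = 1 - μ • M⁻¹ := by
    have h3 : (R * B) * (R * B)ᵀ = M - μ • 1 := by rw [hMA]; abel
    rw [h3, Matrix.mul_sub, Matrix.nonsing_inv_mul M hMdet, Matrix.mul_smul, Matrix.mul_one]
  have hKL : D - D * B * P⁻¹ * (Bᵀ * D) = μ • (R * M⁻¹ * R) := by
    have hDB : D * B = R * (R * B) := by rw [← hRR, Matrix.mul_assoc]
    have hBD : Bᵀ * D = (R * B)ᵀ * R := by
      rw [Matrix.transpose_mul, hRsymm, ← hRR, ← Matrix.mul_assoc]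
    rw [hDB, hBD]
    rw [show R * (R * B) * P⁻¹ * ((R * B)ᵀ * R) = R * ((R * B) * P⁻¹) * ((R * B)ᵀ * R) from by
      simp only [Matrix.mul_assoc], hpt]
    rw [show R * (M⁻¹ * (R * B)) * ((R * B)ᵀ * R)
        = R * (M⁻¹ * ((R * B) * (R * B)ᵀ)) * R from by simp only [Matrix.mul_assoc], hMAA]
    rw [Matrix.mul_sub, Matrix.sub_mul, Matrix.mul_one, hRR, Matrix.mul_smul, Matrix.smul_mul]
    abel
  -- diagonal computations
  have hinvDμ : (D + μ • (1 : Matrix (Fin n) (Fin n) ℝ))⁻¹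
      = Matrix.diagonal (fun i => (σ i + μ)⁻¹) := by
    refine Matrix.inv_eq_left_inv ?_
    rw [hDμ, Matrix.diagonal_mul_diagonal, ← Matrix.diagonal_one]
    exact congrArg Matrix.diagonal (funext fun i => inv_mul_cancel₀ (hσμ i).ne')
  have hc1 : (μ / (1 - t)) • (D * (D + μ • (1 : Matrix (Fin n) (Fin n) ℝ))⁻¹)
      = μ • (R * g * (g * R)) := by
    rw [hinvDμ, hD, hR, hg, Matrix.diagonal_mul_diagonal, Matrix.diagonal_mul_diagonal,
      Matrix.diagonal_mul_diagonal, Matrix.diagonal_mul_diagonal, ← Matrix.diagonal_smul,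
      ← Matrix.diagonal_smul]
    refine congrArg Matrix.diagonal (funext fun i => ?_)
    simp only [Pi.smul_apply, Pi.mul_apply, smul_eq_mul]
    have h1 : Real.sqrt (σ i) * Real.sqrt (σ i) = σ i := Real.mul_self_sqrt (hσ i)
    have h2 : Real.sqrt ((1 - t) * (σ i + μ)) * Real.sqrt ((1 - t) * (σ i + μ))
        = (1 - t) * (σ i + μ) := Real.mul_self_sqrt (hy i).le
    rw [show Real.sqrt (σ i) * (Real.sqrt ((1 - t) * (σ i + μ)))⁻¹
        * ((Real.sqrt ((1 - t) * (σ i + μ)))⁻¹ * Real.sqrt (σ i))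
        = (Real.sqrt (σ i) * Real.sqrt (σ i))
          * (Real.sqrt ((1 - t) * (σ i + μ)) * Real.sqrt ((1 - t) * (σ i + μ)))⁻¹ from by
      rw [mul_inv]; ring]
    rw [h1, h2]
    have h3 := hσμ i
    field_simp
  -- inner matrix of part 1
  have hinner1eq : (μ / (1 - t)) • (D * (D + μ • (1 : Matrix (Fin n) (Fin n) ℝ))⁻¹)
      - (D - D * B * P⁻¹ * (Bᵀ * D))
      = μ • ((R * g) * ((1 : Matrix (Fin n) (Fin n) ℝ) - N⁻¹) * (R * g)ᵀ) := by
    have htr : (R * g)ᵀ = g * R := by rw [Matrix.transpose_mul, hRsymm, hgsymm]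
    rw [hKL, hMinv, hc1, htr, Matrix.mul_sub, Matrix.sub_mul, Matrix.mul_one, smul_sub]
    congr 2
    simp only [Matrix.mul_assoc]
  have hinner1 : ((μ / (1 - t)) • (D * (D + μ • (1 : Matrix (Fin n) (Fin n) ℝ))⁻¹)
      - (D - D * B * P⁻¹ * (Bᵀ * D))).PosSemidef := by
    rw [hinner1eq]
    exact aux_psd_smul (aux_psd_conj honeN (R * g)) hμ.le
  -- lift to K level
  have hUU : ∀ (m : ℕ) (X : Matrix (Fin n) (Fin m) ℝ), Uᵀ * (U * X) = X := fun m X => by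
    rw [← Matrix.mul_assoc, hU₂, Matrix.one_mul]
  have hKμ : K + μ • (1 : Matrix (Fin n) (Fin n) ℝ)
      = U * (D + μ • (1 : Matrix (Fin n) (Fin n) ℝ)) * Uᵀ := by
    rw [hKdec, Matrix.mul_add, Matrix.add_mul]
    congr 1
    rw [Matrix.mul_smul, Matrix.smul_mul, Matrix.mul_one, hU₁]
  have hDμdet : IsUnit (D + μ • (1 : Matrix (Fin n) (Fin n) ℝ)).det := by
    have h : (D + μ • (1 : Matrix (Fin n) (Fin n) ℝ)).PosDef := by
      rw [hDμ]
      exact Matrix.posDef_diagonal_iff.mpr hσμ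
    exact isUnit_iff_ne_zero.mpr h.det_pos.ne'
  have hKinv : (K + μ • (1 : Matrix (Fin n) (Fin n) ℝ))⁻¹
      = U * (D + μ • (1 : Matrix (Fin n) (Fin n) ℝ))⁻¹ * Uᵀ := by
    rw [hKμ]
    refine Matrix.inv_eq_left_inv ?_
    rw [show U * (D + μ • (1 : Matrix (Fin n) (Fin n) ℝ))⁻¹ * Uᵀ
        * (U * (D + μ • (1 : Matrix (Fin n) (Fin n) ℝ)) * Uᵀ)
        = U * ((D + μ • (1 : Matrix (Fin n) (Fin n) ℝ))⁻¹
            * (Uᵀ * (U * ((D + μ • (1 : Matrix (Fin n) (Fin n) ℝ)) * Uᵀ)))) from by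
      simp only [Matrix.mul_assoc], hUU,
      show (D + μ • (1 : Matrix (Fin n) (Fin n) ℝ))⁻¹
          * ((D + μ • (1 : Matrix (Fin n) (Fin n) ℝ)) * Uᵀ)
        = ((D + μ • (1 : Matrix (Fin n) (Fin n) ℝ))⁻¹
          * (D + μ • (1 : Matrix (Fin n) (Fin n) ℝ))) * Uᵀ from (Matrix.mul_assoc _ _ _).symm,
      Matrix.nonsing_inv_mul _ hDμdet, Matrix.one_mul, hU₁]
  have hKK : K * (K + μ • (1 : Matrix (Fin n) (Fin n) ℝ))⁻¹
      = U * (D * (D + μ • (1 : Matrix (Fin n) (Fin n) ℝ))⁻¹) * Uᵀ := by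
    rw [hKinv, hKdec]
    simp only [Matrix.mul_assoc, hUU]
  have hSKS : Sᵀ * K * S + μ • (1 : Matrix (Fin p) (Fin p) ℝ) = P := by
    rw [hP, hKdec, hB, Matrix.transpose_mul, Matrix.transpose_transpose]
    congr 1
    simp only [Matrix.mul_assoc]
  have hKS : K * S = U * (D * B) := by
    rw [hKdec, hB]
    simp only [Matrix.mul_assoc]
  have hSK : Sᵀ * K = Bᵀ * D * Uᵀ := by
    rw [hKdec, hBt]
    simp only [Matrix.mul_assoc]
  have hT1 : (μ / (1 - t)) • (K * (K + μ • (1 : Matrix (Fin n) (Fin n) ℝ))⁻¹)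
      - (K - K * S * (Sᵀ * K * S + μ • (1 : Matrix (Fin p) (Fin p) ℝ))⁻¹ * Sᵀ * K)
      = U * ((μ / (1 - t)) • (D * (D + μ • (1 : Matrix (Fin n) (Fin n) ℝ))⁻¹)
          - (D - D * B * P⁻¹ * (Bᵀ * D))) * Uᵀ := by
    have hL : K * S * (Sᵀ * K * S + μ • (1 : Matrix (Fin p) (Fin p) ℝ))⁻¹ * Sᵀ * K
        = U * (D * B * P⁻¹ * (Bᵀ * D)) * Uᵀ := by
      rw [hSKS, hKS, show U * (D * B) * P⁻¹ * Sᵀ * K = U * (D * B * P⁻¹ * (Sᵀ * K)) from by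
        simp only [Matrix.mul_assoc], hSK]
      simp only [Matrix.mul_assoc]
    rw [hKK, hL, hKdec]
    simp only [Matrix.mul_sub, Matrix.sub_mul, Matrix.mul_smul, Matrix.smul_mul]
  constructor
  · rw [hT1]
    exact aux_psd_conj hinner1 U
  · have hinner2 : ((μ / (1 - t)) • ((1 : Matrix (Fin n) (Fin n) ℝ)
        - D * (D + μ • (1 : Matrix (Fin n) (Fin n) ℝ))⁻¹)).PosSemidef := by
      rw [hinvDμ, hD, Matrix.diagonal_mul_diagonal, ← Matrix.diagonal_one,
        Matrix.diagonal_sub, ← Matrix.diagonal_smul]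
      refine Matrix.posSemidef_diagonal_iff.mpr fun i => ?_
      simp only [Pi.smul_apply, Pi.sub_apply, Pi.mul_apply, Pi.one_apply, smul_eq_mul]
      have h1 : σ i * (σ i + μ)⁻¹ ≤ 1 := by
        rw [← div_eq_mul_inv]
        exact div_le_one_of_le₀ (by linarith) (hσμ i).le
      have hc : 0 ≤ μ / (1 - t) := div_nonneg hμ.le h1t.le
      have h2 : 0 ≤ 1 - σ i * (σ i + μ)⁻¹ := by linarith
      exact mul_nonneg hc h2
    have hT2 : (μ / (1 - t)) • (1 : Matrix (Fin n) (Fin n) ℝ)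
        - (μ / (1 - t)) • (K * (K + μ • (1 : Matrix (Fin n) (Fin n) ℝ))⁻¹)
        = U * ((μ / (1 - t)) • ((1 : Matrix (Fin n) (Fin n) ℝ)
            - D * (D + μ • (1 : Matrix (Fin n) (Fin n) ℝ))⁻¹)) * Uᵀ := by
      rw [hKK, Matrix.mul_smul, Matrix.smul_mul, Matrix.mul_sub, Matrix.sub_mul,
        Matrix.mul_one, hU₁, smul_sub]
    rw [hT2]
    exact aux_psd_conj hinner2 U
end

section
/- Let K, L_γ be n×n positive semidefinite matrices with K − L_γ ⪯ (nγ/(1−t)) K(K+nγI)⁻¹ for t = 1/2 and γ > 0, and suppose σ_n > 0 is the smallest eigenvalue of K. Then for any λ > 0, L_γ(L_γ+nλI)⁻¹ ⪰ K(K+nλI)⁻¹ · ((σ_n − nγ)/(σ_n + nγ)), entrywise on the diagonal: diag(L_γ(L_γ+nλI)⁻¹)_i ≥ ((σ_n−nγ)/(σ_n+nγ)) · diag(K(K+nλI)⁻¹)_i for all i. -/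
open Matrix
open Matrix

namespace MLB
variable {N : Type*} [Fintype N] [DecidableEq N] {A : Matrix N N ℝ}

lemma star_mul_self (hA : A.IsHermitian) :
    star (hA.eigenvectorUnitary : Matrix N N ℝ) * (hA.eigenvectorUnitary : Matrix N N ℝ) = 1 :=
  Unitary.star_mul_self_of_mem (SetLike.coe_mem _)

lemma mul_star_self (hA : A.IsHermitian) :
    (hA.eigenvectorUnitary : Matrix N N ℝ) * star (hA.eigenvectorUnitary : Matrix N N ℝ) = 1 :=
  Unitary.mul_star_self_of_mem (SetLike.coe_mem _)

lemma cfc_def (hA : A.IsHermitian) (f : ℝ → ℝ) :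
    hA.cfc f = (hA.eigenvectorUnitary : Matrix N N ℝ) * diagonal (f ∘ hA.eigenvalues) *
      star (hA.eigenvectorUnitary : Matrix N N ℝ) := rfl

lemma cfc_congr (hA : A.IsHermitian) {f g : ℝ → ℝ}
    (h : ∀ i, f (hA.eigenvalues i) = g (hA.eigenvalues i)) : hA.cfc f = hA.cfc g := by
  rw [cfc_def, cfc_def]
  congr 2
  ext i j
  simp only [diagonal, Function.comp, of_apply]
  split <;> simp [h]

lemma cfc_id (hA : A.IsHermitian) : hA.cfc id = A := by
  rw [cfc_def]; exact hA.spectral_theorem.symm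

lemma cfc_id' (hA : A.IsHermitian) : hA.cfc (fun s => s) = A := cfc_id hA

lemma cfc_one (hA : A.IsHermitian) : hA.cfc (fun _ => 1) = 1 := by
  rw [cfc_def]
  have : diagonal ((fun _ => (1:ℝ)) ∘ hA.eigenvalues) = 1 := diagonal_one
  rw [this, mul_one, mul_star_self]

lemma cfc_mul (hA : A.IsHermitian) (f g : ℝ → ℝ) :
    hA.cfc f * hA.cfc g = hA.cfc (fun x => f x * g x) := by
  rw [cfc_def, cfc_def, cfc_def]
  have h : ∀ {a b c d e f : Matrix N N ℝ}, (a * b * c) * (d * e * f) = a * (b * (c * d) * e) * f := by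
    intros; simp only [mul_assoc]
  rw [h, star_mul_self, mul_one, diagonal_mul_diagonal]
  congr 2

lemma cfc_add (hA : A.IsHermitian) (f g : ℝ → ℝ) :
    hA.cfc f + hA.cfc g = hA.cfc (fun x => f x + g x) := by
  rw [cfc_def, cfc_def, cfc_def, ← add_mul, ← mul_add, diagonal_add]
  congr

lemma cfc_smul (hA : A.IsHermitian) (c : ℝ) (f : ℝ → ℝ) :
    c • hA.cfc f = hA.cfc (fun x => c * f x) := by
  rw [cfc_def, cfc_def, ← smul_mul_assoc, ← mul_smul_comm, ← diagonal_smul]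
  congr 2

lemma cfc_const (hA : A.IsHermitian) (c : ℝ) :
    hA.cfc (fun _ => c) = c • (1 : Matrix N N ℝ) := by
  have h2 : c • hA.cfc (fun _ => (1:ℝ)) = hA.cfc (fun x => c * 1) := cfc_smul hA c _
  rw [cfc_one] at h2
  rw [h2]
  exact cfc_congr hA (by simp)

lemma cfc_sub (hA : A.IsHermitian) (f g : ℝ → ℝ) :
    hA.cfc f - hA.cfc g = hA.cfc (fun x => f x - g x) := by
  have := cfc_add hA f (fun x => -g x)
  have hneg : hA.cfc (fun x => -g x) = -hA.cfc g := by
    have := cfc_smul hA (-1) g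
    simp only [neg_one_mul, neg_smul, one_smul] at this
    exact this.symm
  rw [hneg] at this
  simpa [sub_eq_add_neg] using this

lemma cfc_posSemidef (hA : A.IsHermitian) {f : ℝ → ℝ}
    (h : ∀ i, 0 ≤ f (hA.eigenvalues i)) : (hA.cfc f).PosSemidef := by
  rw [cfc_def, star_eq_conjTranspose]
  exact (PosSemidef.diagonal (fun i => h i)).mul_mul_conjTranspose_same _

lemma cfc_posSemidef_rev (hA : A.IsHermitian) {f : ℝ → ℝ}
    (h : (hA.cfc f).PosSemidef) : ∀ i, 0 ≤ f (hA.eigenvalues i) := by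
  have h2 := h.conjTranspose_mul_mul_same (hA.eigenvectorUnitary : Matrix N N ℝ)
  rw [cfc_def] at h2
  rw [← star_eq_conjTranspose] at h2
  have e : star (hA.eigenvectorUnitary : Matrix N N ℝ) *
      ((hA.eigenvectorUnitary : Matrix N N ℝ) * diagonal (f ∘ hA.eigenvalues) *
        star (hA.eigenvectorUnitary : Matrix N N ℝ)) * (hA.eigenvectorUnitary : Matrix N N ℝ)
      = diagonal (f ∘ hA.eigenvalues) := by
    have hh : ∀ {a b c : Matrix N N ℝ}, a * (b * c * a) * b = (a * b) * c * (a * b) := by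
      intros; simp only [mul_assoc]
    rw [hh, star_mul_self, one_mul, mul_one]
  rw [e] at h2
  exact fun i => posSemidef_diagonal_iff.mp h2 i

lemma cfc_inv (hA : A.IsHermitian) {f : ℝ → ℝ}
    (h : ∀ i, f (hA.eigenvalues i) ≠ 0) : (hA.cfc f)⁻¹ = hA.cfc (fun x => (f x)⁻¹) := by
  apply inv_eq_right_inv
  rw [cfc_mul]
  rw [cfc_congr hA (g := fun _ => 1) (fun i => by field_simp [h i])]
  exact cfc_one hA

lemma cfc_isUnit (hA : A.IsHermitian) {f : ℝ → ℝ}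
    (h : ∀ i, f (hA.eigenvalues i) ≠ 0) : IsUnit (hA.cfc f) := by
  have : hA.cfc f * hA.cfc (fun x => (f x)⁻¹) = 1 := by
    rw [cfc_mul, cfc_congr hA (g := fun _ => 1) (fun i => by field_simp [h i])]
    exact cfc_one hA
  rw [Matrix.isUnit_iff_isUnit_det]
  refine IsUnit.of_mul_eq_one (hA.cfc (fun x => (f x)⁻¹)).det ?_
  rw [← det_mul, this, det_one]

end MLB

namespace MLB
variable {N : Type*} [Fintype N] [DecidableEq N] {A : Matrix N N ℝ}

lemma psd_smul {P : Matrix N N ℝ} (hP : P.PosSemidef) {c : ℝ} (hc : 0 ≤ c) :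
    (c • P).PosSemidef := by
  have hherm : (c • P).IsHermitian := by
    unfold Matrix.IsHermitian
    rw [Matrix.conjTranspose_smul, hP.1.eq]
    simp
  exact hP.smul hc

lemma psd_diag {P : Matrix N N ℝ} (hP : P.PosSemidef) (i : N) : 0 ≤ P i i := by
  exact hP.diag_nonneg

lemma inv_anti {A B : Matrix N N ℝ} (hA : A.PosDef) (hB : B.PosDef)
    (hAB : (A - B).PosSemidef) : (B⁻¹ - A⁻¹).PosSemidef := by
  have hev : ∀ i, 0 < hA.1.eigenvalues i := hA.eigenvalues_pos
  set S := hA.1.cfc (fun s => (Real.sqrt s)⁻¹) with hSdef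
  have hSpsd : S.PosSemidef := cfc_posSemidef _ (fun i => by positivity)
  have hSherm : Sᴴ = S := hSpsd.1
  have hAinv : A⁻¹ = hA.1.cfc (fun s => s⁻¹) := by
    conv_lhs => rw [← cfc_id hA.1]
    exact cfc_inv hA.1 (f := id) (fun i => (hev i).ne')
  have hSS : S * S = A⁻¹ := by
    rw [hSdef, cfc_mul, hAinv]
    exact cfc_congr hA.1
      (fun i => by rw [← mul_inv, Real.mul_self_sqrt (hev i).le])
  have hSAS : S * A * S = 1 := by
    conv_lhs => rw [← cfc_id hA.1]
    rw [hSdef, cfc_mul, cfc_mul, ← cfc_one hA.1]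
    refine cfc_congr hA.1 (fun i => ?_)
    have h0 : Real.sqrt (hA.1.eigenvalues i) ≠ 0 :=
      Real.sqrt_ne_zero'.mpr (hev i)
    field_simp
    exact (Real.sq_sqrt (hev i).le).symm
  have hSunit : IsUnit S :=
    cfc_isUnit hA.1 (fun i => inv_ne_zero (Real.sqrt_ne_zero'.mpr (hev i)))
  have hSdet : IsUnit S.det := (Matrix.isUnit_iff_isUnit_det S).mp hSunit
  set C := S * B * S with hCdef
  have hCpsd : C.PosSemidef := by
    have := hB.posSemidef.mul_mul_conjTranspose_same S
    rwa [hSherm] at this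
  have hCherm := hCpsd.1
  have hCdet : C.det ≠ 0 := by
    rw [hCdef, Matrix.det_mul, Matrix.det_mul]
    exact mul_ne_zero (mul_ne_zero hSdet.ne_zero hB.det_pos.ne') hSdet.ne_zero
  have hevC_pos : ∀ j, 0 < hCherm.eigenvalues j := by
    intro j
    rcases lt_or_eq_of_le (hCpsd.eigenvalues_nonneg j) with h | h
    · exact h
    · exfalso
      apply hCdet
      rw [hCherm.det_eq_prod_eigenvalues]
      exact Finset.prod_eq_zero (Finset.mem_univ j) (by exact_mod_cast h.symm)
  have h1C : (1 - C).PosSemidef := by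
    have hps := hAB.mul_mul_conjTranspose_same S
    rw [hSherm] at hps
    have : S * (A - B) * S = 1 - C := by
      rw [Matrix.mul_sub, Matrix.sub_mul, hSAS, hCdef]
    rwa [this] at hps
  have hevC_le : ∀ j, hCherm.eigenvalues j ≤ 1 := by
    intro j
    have h1 : (1 : Matrix N N ℝ) - C = hCherm.cfc (fun s => 1 - s) := by
      rw [← cfc_sub, cfc_one, cfc_id']
    rw [h1] at h1C
    have := cfc_posSemidef_rev hCherm h1C j
    linarith
  have hCinv : C⁻¹ = hCherm.cfc (fun s => s⁻¹) := by
    conv_lhs => rw [← cfc_id hCherm]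
    exact cfc_inv hCherm (f := id) (fun j => (hevC_pos j).ne')
  have hD : (C⁻¹ - 1).PosSemidef := by
    rw [hCinv, ← cfc_one hCherm, cfc_sub]
    refine cfc_posSemidef hCherm (fun j => ?_)
    have h0 := hevC_pos j
    have h1 := hevC_le j
    have : (1:ℝ) ≤ (hCherm.eigenvalues j)⁻¹ := by
      rw [le_inv_comm₀ one_pos h0]
      simpa using h1
    linarith
  have key : S * (C⁻¹ - 1) * S = B⁻¹ - A⁻¹ := by
    have hSCS : S * C⁻¹ * S = B⁻¹ := by
      rw [hCdef, Matrix.mul_inv_rev, Matrix.mul_inv_rev]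
      rw [← Matrix.mul_assoc, ← Matrix.mul_assoc, Matrix.mul_nonsing_inv S hSdet,
        Matrix.one_mul, Matrix.mul_assoc, Matrix.nonsing_inv_mul S hSdet, Matrix.mul_one]
    rw [Matrix.mul_sub, Matrix.mul_one, Matrix.sub_mul, hSCS, hSS]
  have := hD.mul_mul_conjTranspose_same S
  rw [hSherm, key] at this
  exact this

end MLB

lemma scalar_key (a b σn s : ℝ) (ha : 0 < a) (hb : 0 < b) (haσ : a < σn) (hs : σn ≤ s) :
    0 ≤ (s - 2*a*(s*(s+a)⁻¹)) * ((s - 2*a*(s*(s+a)⁻¹)) + b)⁻¹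
      - (σn - a)/(σn + a) * (s * (s+b)⁻¹) := by
  have hσ : 0 < σn := ha.trans haσ
  have hs0 : 0 < s := lt_of_lt_of_le hσ hs
  have hsa : 0 < s + a := by linarith
  have hsb : 0 < s + b := by linarith
  have hσa : 0 < σn + a := by linarith
  set m : ℝ := s - 2*a*(s*(s+a)⁻¹) with hmdef
  have hm : m * (s+a) = s*(s-a) := by
    rw [hmdef]; field_simp; ring
  have hm0 : 0 ≤ m := by
    have h1 : 0 ≤ s*(s-a) := by nlinarith
    nlinarith
  have hmb : 0 < m + b := by linarith
  rw [sub_nonneg, ← div_eq_mul_inv, ← div_eq_mul_inv, div_mul_div_comm,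
    div_le_div_iff₀ (by positivity) hmb]
  have hm2 : m * ((σn + a) * (s + b)) * (s+a) = s*(s-a)*((σn + a) * (s + b)) := by
    rw [show m * ((σn + a) * (s + b)) * (s+a) = (m * (s+a)) * ((σn + a) * (s + b)) by ring, hm]
  have key : (σn - a) * s * (m + b) * (s+a) ≤ m * ((σn + a) * (s + b)) * (s+a) := by
    have e1 : (σn - a) * s * (m + b) * (s+a) = (σn - a) * s * (m*(s+a)) + (σn-a)*s*b*(s+a) := by
      ring
    rw [e1, hm, hm2]
    nlinarith [mul_nonneg (mul_nonneg hs0.le hs0.le)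
        (sub_nonneg.2 (le_trans haσ.le hs) : (0:ℝ) ≤ s - a),
      mul_nonneg (mul_nonneg hs0.le hb.le) (sub_nonneg.2 hs), ha.le, hb.le]
  exact le_of_mul_le_mul_right key hsa

/-- Multiplicative lower bound on approximate ridge leverage scores: if
    `K − L_γ ⪯ 2nγ K (K + nγI)⁻¹` (the case `t = 1/2`) and `K ⪰ σₙ I` with
    `σₙ > nγ`, then for every `i`,
    `diag(L_γ (L_γ + nλI)⁻¹)_i ≥ ((σₙ − nγ)/(σₙ + nγ)) diag(K (K + nλI)⁻¹)_i`. -/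
theorem multiplicative_leverage_bound
    (n : ℕ) (K Lγ : Matrix (Fin n) (Fin n) ℝ) (γ lam σn : ℝ)
    (hK : K.PosDef) (hLγ : Lγ.PosSemidef)
    (hσn_pos : 0 < σn) (hσn_γ : (n : ℝ) * γ < σn)
    (hσn : (K - σn • (1 : Matrix (Fin n) (Fin n) ℝ)).PosSemidef)
    (hγ : 0 < γ) (hlam : 0 < lam)
    (hKL : ((2 * ((n : ℝ) * γ)) • (K * (K + ((n : ℝ) * γ) • (1 : Matrix (Fin n) (Fin n) ℝ))⁻¹)
        - (K - Lγ)).PosSemidef) :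
    ∀ i : Fin n,
      ((σn - (n : ℝ) * γ) / (σn + (n : ℝ) * γ)) *
          (K * (K + ((n : ℝ) * lam) • (1 : Matrix (Fin n) (Fin n) ℝ))⁻¹) i i
        ≤ (Lγ * (Lγ + ((n : ℝ) * lam) • (1 : Matrix (Fin n) (Fin n) ℝ))⁻¹) i i := by
  intro i
  have hn : 0 < n := i.pos
  set a : ℝ := (n:ℝ) * γ with hadef
  set b : ℝ := (n:ℝ) * lam with hbdef
  have ha : 0 < a := mul_pos (Nat.cast_pos.mpr hn) hγ
  have hb : 0 < b := mul_pos (Nat.cast_pos.mpr hn) hlam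
  have hev_pos : ∀ j, 0 < hK.1.eigenvalues j := hK.eigenvalues_pos
  -- eigenvalue lower bound
  have hKσ : hK.1.cfc (fun s => s - σn) = K - σn • 1 := by
    rw [← MLB.cfc_sub, MLB.cfc_id', MLB.cfc_const]
  have hge : ∀ j, σn ≤ hK.1.eigenvalues j := by
    intro j
    have h := MLB.cfc_posSemidef_rev hK.1 (f := fun s => s - σn) (by rw [hKσ]; exact hσn) j
    linarith
  -- representations as functions of K
  have hKa : hK.1.cfc (fun s => s + a) = K + a • 1 := by
    rw [← MLB.cfc_add, MLB.cfc_id', MLB.cfc_const]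
  have hKainv : hK.1.cfc (fun s => (s + a)⁻¹) = (K + a • 1)⁻¹ := by
    rw [← hKa, ← MLB.cfc_inv hK.1 (f := fun s => s + a) (fun j => by have := hev_pos j; positivity)]
  have hXa : hK.1.cfc (fun s => s * (s + a)⁻¹) = K * (K + a • 1)⁻¹ :=
    calc hK.1.cfc (fun s => s * (s + a)⁻¹)
        = hK.1.cfc (fun s => s) * hK.1.cfc (fun s => (s + a)⁻¹) :=
          (MLB.cfc_mul hK.1 (fun s => s) (fun s => (s + a)⁻¹)).symm
      _ = K * (K + a • 1)⁻¹ := by rw [MLB.cfc_id', hKainv]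
  have hKb : hK.1.cfc (fun s => s + b) = K + b • 1 := by
    rw [← MLB.cfc_add, MLB.cfc_id', MLB.cfc_const]
  have hKbinv : hK.1.cfc (fun s => (s + b)⁻¹) = (K + b • 1)⁻¹ := by
    rw [← hKb, ← MLB.cfc_inv hK.1 (f := fun s => s + b) (fun j => by have := hev_pos j; positivity)]
  have hfK : hK.1.cfc (fun s => s * (s + b)⁻¹) = K * (K + b • 1)⁻¹ :=
    calc hK.1.cfc (fun s => s * (s + b)⁻¹)
        = hK.1.cfc (fun s => s) * hK.1.cfc (fun s => (s + b)⁻¹) :=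
          (MLB.cfc_mul hK.1 (fun s => s) (fun s => (s + b)⁻¹)).symm
      _ = K * (K + b • 1)⁻¹ := by rw [MLB.cfc_id', hKbinv]
  -- the comparison matrix M
  have hM : hK.1.cfc (fun s => s - 2*a*(s*(s+a)⁻¹)) = K - (2*a) • (K * (K + a • 1)⁻¹) := by
    rw [← MLB.cfc_sub, MLB.cfc_id', ← hXa, MLB.cfc_smul]
  set M : Matrix (Fin n) (Fin n) ℝ := K - (2*a) • (K * (K + a • 1)⁻¹) with hMdef
  have hm_nonneg : ∀ j, 0 ≤ (fun s => s - 2*a*(s*(s+a)⁻¹)) (hK.1.eigenvalues j) := by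
    intro j
    set s := hK.1.eigenvalues j with hsdef
    have hs0 : 0 < s := hev_pos j
    have hsge : σn ≤ s := hge j
    have hsa : 0 < s + a := by linarith
    have hmm : (s - 2*a*(s*(s+a)⁻¹)) * (s+a) = s*(s-a) := by field_simp; ring
    have h1 : 0 ≤ s*(s-a) := by nlinarith
    simp only
    nlinarith
  have hM_psd : M.PosSemidef := by
    rw [← hM]; exact MLB.cfc_posSemidef hK.1 hm_nonneg
  have hb1_pd : ((b : ℝ) • (1 : Matrix (Fin n) (Fin n) ℝ)).PosDef := by
    rw [Matrix.smul_one_eq_diagonal]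
    exact Matrix.posDef_diagonal_iff.mpr (fun _ => hb)
  have hMb_pd : (M + b • 1).PosDef := Matrix.PosDef.posSemidef_add hM_psd hb1_pd
  have hLb_pd : (Lγ + b • 1).PosDef := Matrix.PosDef.posSemidef_add hLγ hb1_pd
  have hLM : (Lγ - M).PosSemidef := by
    have e : (2*a) • (K * (K + a • 1)⁻¹) - (K - Lγ) = Lγ - M := by
      rw [hMdef]; abel
    rwa [e] at hKL
  have hmono : ((M + b • 1)⁻¹ - (Lγ + b • 1)⁻¹).PosSemidef := by
    refine MLB.inv_anti hLb_pd hMb_pd ?_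
    have e : (Lγ + b • 1) - (M + b • 1) = Lγ - M := by abel
    rwa [e]
  -- ridge functions
  have hfL_eq : Lγ * (Lγ + b • 1)⁻¹ = 1 - b • (Lγ + b • 1)⁻¹ := by
    have h1 : (Lγ + b • 1) * (Lγ + b • 1)⁻¹ = 1 :=
      Matrix.mul_nonsing_inv _ ((Matrix.isUnit_iff_isUnit_det _).mp hLb_pd.isUnit)
    calc Lγ * (Lγ + b • 1)⁻¹ = ((Lγ + b • 1) - b • 1) * (Lγ + b • 1)⁻¹ := by
          rw [add_sub_cancel_right]
      _ = (Lγ + b • 1) * (Lγ + b • 1)⁻¹ - (b • 1) * (Lγ + b • 1)⁻¹ := Matrix.sub_mul _ _ _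
      _ = 1 - b • (Lγ + b • 1)⁻¹ := by rw [h1, Matrix.smul_mul, Matrix.one_mul]
  have hfM_eq : M * (M + b • 1)⁻¹ = 1 - b • (M + b • 1)⁻¹ := by
    have h1 : (M + b • 1) * (M + b • 1)⁻¹ = 1 :=
      Matrix.mul_nonsing_inv _ ((Matrix.isUnit_iff_isUnit_det _).mp hMb_pd.isUnit)
    calc M * (M + b • 1)⁻¹ = ((M + b • 1) - b • 1) * (M + b • 1)⁻¹ := by
          rw [add_sub_cancel_right]
      _ = (M + b • 1) * (M + b • 1)⁻¹ - (b • 1) * (M + b • 1)⁻¹ := Matrix.sub_mul _ _ _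
      _ = 1 - b • (M + b • 1)⁻¹ := by rw [h1, Matrix.smul_mul, Matrix.one_mul]
  have step1 : (Lγ * (Lγ + b • 1)⁻¹ - M * (M + b • 1)⁻¹).PosSemidef := by
    have e : Lγ * (Lγ + b • 1)⁻¹ - M * (M + b • 1)⁻¹
        = b • ((M + b • 1)⁻¹ - (Lγ + b • 1)⁻¹) := by
      rw [hfL_eq, hfM_eq, smul_sub]; abel
    rw [e]; exact MLB.psd_smul hmono hb.le
  -- function-of-K comparison
  have hMb : hK.1.cfc (fun s => (s - 2*a*(s*(s+a)⁻¹)) + b) = M + b • 1 := by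
    rw [← MLB.cfc_add, hM, MLB.cfc_const]
  have hMb_ne : ∀ j, ((fun s => (s - 2*a*(s*(s+a)⁻¹)) + b) (hK.1.eigenvalues j)) ≠ 0 := by
    intro j
    have := hm_nonneg j
    simp only at this ⊢
    positivity
  have hMbinv : hK.1.cfc (fun s => ((s - 2*a*(s*(s+a)⁻¹)) + b)⁻¹) = (M + b • 1)⁻¹ := by
    rw [← hMb, ← MLB.cfc_inv hK.1 hMb_ne]
  have hfM : hK.1.cfc (fun s => (s - 2*a*(s*(s+a)⁻¹)) * ((s - 2*a*(s*(s+a)⁻¹)) + b)⁻¹)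
      = M * (M + b • 1)⁻¹ := by
    rw [← hMbinv, ← hM, MLB.cfc_mul]
  have step2 : (M * (M + b • 1)⁻¹
      - ((σn - a) / (σn + a)) • (K * (K + b • 1)⁻¹)).PosSemidef := by
    rw [← hfM, ← hfK, MLB.cfc_smul, MLB.cfc_sub]
    refine MLB.cfc_posSemidef hK.1 (fun j => ?_)
    exact scalar_key a b σn (hK.1.eigenvalues j) ha hb hσn_γ (hge j)
  have total : (Lγ * (Lγ + b • 1)⁻¹
      - ((σn - a) / (σn + a)) • (K * (K + b • 1)⁻¹)).PosSemidef := by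
    have e : Lγ * (Lγ + b • 1)⁻¹ - ((σn - a) / (σn + a)) • (K * (K + b • 1)⁻¹)
        = (Lγ * (Lγ + b • 1)⁻¹ - M * (M + b • 1)⁻¹)
          + (M * (M + b • 1)⁻¹ - ((σn - a) / (σn + a)) • (K * (K + b • 1)⁻¹)) := by abel
    rw [e]; exact step1.add step2
  have hd := MLB.psd_diag total i
  simp only [Matrix.sub_apply, Matrix.smul_apply, smul_eq_mul] at hd
  linarith
end
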